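/- arXiv:1706.07074 — 2 statements merged into one kernel-verified Lean document; each statement's English description precedes it below -/
import Mathlib

section
/- Let P, Q, P̂ be orthogonal projections on a Hilbert space H such that Q P Q ≤ P̂ and P̂ ≤ Q (in the sense of positive operators, equivalently inclusion of ranges for projections). Then P ≤ P̂ + (I − Q), where I is the identity operator. -/
/-!
Since `P̂ ≤ Q`, the range of `P̂` lies in that of `Q`, i.e. `Q P̂ = P̂`. Since `0 ≤ Q P Q ≤ P̂`, the
operator `Q P Q` vanishes on the kernel of `P̂`, and as `Q P Q = (P Q)* (P Q)` so does `P Q`: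
`P Q = P Q P̂ = P P̂`. These relations make `P̂ + (1 - Q) - P` idempotent, hence a projection,
hence positive.
-/

namespace IsStarProjection

lemma mul_eq_zero_of_star_mul_mul_eq_zero {A : Type*} [NonUnitalNormedRing A] [StarRing A]
    [CStarRing A] {p x : A} (hp : IsStarProjection p) (hx : star x * p * x = 0) : p * x = 0 := by
  rw [← CStarRing.star_mul_self_eq_zero_iff, star_mul, hp.isSelfAdjoint.star_eq]
  calc star x * p * (p * x) = star x * (p * p) * x := by simp only [mul_assoc]
    _ = 0 := by rw [hp.isIdempotentElem.eq, hx]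

lemma add_one_sub_sub_of_mul_eq {R : Type*} [Ring R] [StarRing R] {p q r : R}
    (hp : IsStarProjection p) (hq : IsStarProjection q) (hr : IsStarProjection r)
    (hqr : q * r = r) (hpr : p * r = p * q) :
    IsStarProjection (r + (1 - q) - p) := by
  have hrq : r * q = r := by
    simpa [hq.isSelfAdjoint.star_eq, hr.isSelfAdjoint.star_eq] using congr(star $hqr)
  have hrp : r * p = q * p := by
    simpa [hp.isSelfAdjoint.star_eq, hq.isSelfAdjoint.star_eq, hr.isSelfAdjoint.star_eq]
      using congr(star $hpr)
  refine ⟨?_, (hr.isSelfAdjoint.add hq.one_sub.isSelfAdjoint).sub hp.isSelfAdjoint⟩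
  simp only [IsIdempotentElem, sub_mul, mul_sub, add_mul, mul_add, one_mul, mul_one,
    hp.isIdempotentElem.eq, hq.isIdempotentElem.eq, hr.isIdempotentElem.eq, hqr, hrq, hpr, hrp]
  abel

variable {A : Type*} [CStarAlgebra A] [PartialOrder A] [StarOrderedRing A] {p q r : A}

lemma mul_mul_one_sub_eq_zero_of_conj_le (hp : IsStarProjection p) (hq : IsSelfAdjoint q)
    (hr : IsStarProjection r) (h : q * p * q ≤ r) : p * q * (1 - r) = 0 := by
  have hconj : q * p * q * r = q * p * q :=
    (hr.mul_right_and_mul_left_of_nonneg_of_le (hq.conjugate_nonneg hp.nonneg) h).1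
  rw [mul_assoc]
  refine hp.mul_eq_zero_of_star_mul_mul_eq_zero ?_
  rw [star_mul, hq.star_eq, hr.one_sub.isSelfAdjoint.star_eq]
  calc (1 - r) * q * p * (q * (1 - r)) = (1 - r) * (q * p * q * (1 - r)) := by
        simp only [mul_assoc]
    _ = 0 := by rw [mul_sub, mul_one, hconj, sub_self, mul_zero]

theorem le_add_one_sub_of_conj_le (hp : IsStarProjection p) (hq : IsStarProjection q)
    (hr : IsStarProjection r) (h₁ : q * p * q ≤ r) (h₂ : r ≤ q) : p ≤ r + (1 - q) := by
  have hqr : q * r = r := (hr.le_iff_mul_eq_right hq).1 h₂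
  have hpqr := mul_mul_one_sub_eq_zero_of_conj_le hp hq.isSelfAdjoint hr h₁
  rw [mul_sub, mul_one, sub_eq_zero] at hpqr
  have hpr : p * r = p * q := by rw [← hqr, ← mul_assoc, ← hpqr]
  exact sub_nonneg.1 (add_one_sub_sub_of_mul_eq hp hq hr hqr hpr).nonneg

end IsStarProjection

/-- If `P`, `Q`, `P̂` are orthogonal projections on a Hilbert space with
`Q P Q ≤ P̂` and `P̂ ≤ Q`, then `P ≤ P̂ + (I - Q)`. -/
theorem stmt0 {H : Type*} [NormedAddCommGroup H] [InnerProductSpace ℂ H] [CompleteSpace H]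
    (P Q Phat : H →L[ℂ] H)
    (hPsa : IsSelfAdjoint P) (hPidem : P ∘L P = P)
    (hQsa : IsSelfAdjoint Q) (hQidem : Q ∘L Q = Q)
    (hPhatsa : IsSelfAdjoint Phat) (hPhatidem : Phat ∘L Phat = Phat)
    (h1 : (Phat - Q ∘L P ∘L Q).IsPositive)
    (h2 : (Q - Phat).IsPositive) :
    ((Phat + (1 - Q)) - P).IsPositive := by
  have hconj : Q * P * Q ≤ Phat := by rw [mul_assoc]; exact h1
  exact IsStarProjection.le_add_one_sub_of_conj_le ⟨hPidem, hPsa⟩ ⟨hQidem, hQsa⟩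
    ⟨hPhatidem, hPhatsa⟩ hconj h2
end

section
/- Let 𝒞 be the family of subsets of Γ(ℝ³) of the form ∅(B) := { q ∈ Γ(ℝ³) : q ∩ B = ∅ }, where B ranges over all open balls in ℝ³, and where Γ(ℝ³) carries the quotient topology induced by the unordering map τ from ⋃ₙ (ℝ³)ⁿ_{≠} (ordered configurations of distinct points) to Γ(ℝ³). Then for every n ∈ ℕ, the set Γₙ(ℝ³) := { q ∈ Γ(ℝ³) : #q = n } belongs to the σ-algebra generated by 𝒞. -/
open Set Metric

/-- Configuration space over `ℝ³`: finite subsets. -/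
def Config3 := {q : Set (EuclideanSpace ℝ (Fin 3)) // q.Finite}

/-- The family `𝒞` of sets `∅(B) = {q : q ∩ B = ∅}`, `B` an open ball. -/
def ballEmptySets : Set (Set Config3) :=
  {S | ∃ (x : EuclideanSpace ℝ (Fin 3)) (r : ℝ), 0 < r ∧
    S = {q : Config3 | q.1 ∩ Metric.ball x r = ∅}}

private lemma hit_meas (x : EuclideanSpace ℝ (Fin 3)) (r : ℝ) (hr : 0 < r) :
    @MeasurableSet Config3 (MeasurableSpace.generateFrom ballEmptySets)
      {q : Config3 | (q.1 ∩ Metric.ball x r).Nonempty} := by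
  have h : @MeasurableSet Config3 (MeasurableSpace.generateFrom ballEmptySets)
      {q : Config3 | q.1 ∩ Metric.ball x r = ∅} :=
    MeasurableSpace.measurableSet_generateFrom ⟨x, r, hr, rfl⟩
  have h2 := h.compl
  convert h2 using 1
  ext q
  simp [Set.nonempty_iff_ne_empty]

private lemma Sge_meas (n : ℕ) :
    @MeasurableSet Config3 (MeasurableSpace.generateFrom ballEmptySets)
      {q : Config3 | n ≤ q.1.ncard} := by
  obtain ⟨D, hDc, hDd⟩ := TopologicalSpace.exists_countable_dense (EuclideanSpace ℝ (Fin 3))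
  haveI := hDc.to_subtype
  have key : {q : Config3 | n ≤ q.1.ncard} =
      ⋃ (f : {f : Fin n → D × {r : ℚ // 0 < r} //
          ∀ i j, i ≠ j → Disjoint (Metric.ball ((f i).1 : EuclideanSpace ℝ (Fin 3)) ((f i).2.1 : ℝ))
            (Metric.ball ((f j).1 : EuclideanSpace ℝ (Fin 3)) ((f j).2.1 : ℝ))}),
        ⋂ (i : Fin n),
          {q : Config3 |
            (q.1 ∩ Metric.ball ((f.1 i).1 : EuclideanSpace ℝ (Fin 3)) ((f.1 i).2.1 : ℝ)).Nonempty} := by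
    ext q
    constructor
    · intro hq
      -- q has at least n points: pick n distinct points of q
      obtain ⟨t, hts, htc⟩ := Set.exists_subset_card_eq hq
      have htfin : t.Finite := q.2.subset hts
      haveI : Finite t := htfin.to_subtype
      have hcard : Nat.card t = n := by
        rwa [Nat.card_coe_set_eq]
      let e := (Finite.equivFinOfCardEq hcard).symm
      set x : Fin n → EuclideanSpace ℝ (Fin 3) := fun i => (e i : EuclideanSpace ℝ (Fin 3)) with hx
      have hxinj : Function.Injective x := fun i j hij => by
        apply e.injective; exact Subtype.ext hij
      have hxq : ∀ i, x i ∈ q.1 := fun i => hts (e i).2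
      -- separation
      obtain ⟨ε, hε, hsep⟩ : ∃ ε > 0, ∀ i j : Fin n, i ≠ j → 7 * ε ≤ dist (x i) (x j) := by
        by_cases hn : n ≤ 1
        · refine ⟨1, one_pos, fun i j hij => absurd ?_ hij⟩
          have : Subsingleton (Fin n) := by
            interval_cases n <;> infer_instance
          exact Subsingleton.elim i j
        · push_neg at hn
          have h2 : 2 ≤ n := hn
          set T : Finset ℝ := (Finset.univ.filter (fun p : Fin n × Fin n => p.1 ≠ p.2)).image
            (fun p => dist (x p.1) (x p.2)) with hT
          have hTne : T.Nonempty := by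
            refine ⟨dist (x ⟨0, by omega⟩) (x ⟨1, by omega⟩), ?_⟩
            simp only [hT, Finset.mem_image]
            exact ⟨(⟨0, by omega⟩, ⟨1, by omega⟩), by simp [Finset.mem_filter, Fin.ext_iff], rfl⟩
          set m := T.min' hTne with hm
          have hmpos : 0 < m := by
            have hmem := T.min'_mem hTne
            simp only [hT, Finset.mem_image, Finset.mem_filter] at hmem
            obtain ⟨⟨i, j⟩, ⟨-, hij⟩, hd⟩ := hmem
            rw [hm, ← hd]
            exact dist_pos.mpr (fun h => hij (hxinj h))
          refine ⟨m / 7, by positivity, fun i j hij => ?_⟩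
          have : m ≤ dist (x i) (x j) := by
            apply Finset.min'_le
            simp only [hT, Finset.mem_image, Finset.mem_filter]
            exact ⟨(i, j), ⟨Finset.mem_univ _, hij⟩, rfl⟩
          linarith
      -- choose centers and radius
      have hcent : ∀ i : Fin n, ∃ d ∈ D, dist (x i) d < ε := fun i =>
        hDd.exists_dist_lt (x i) hε
      choose d hdD hdx using hcent
      obtain ⟨r, hr1, hr2⟩ := exists_rat_btwn (by linarith : ε < 2 * ε)
      have hrpos : (0 : ℚ) < r := by
        have : (0 : ℝ) < (r : ℝ) := lt_trans hε hr1
        exact_mod_cast this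
      refine Set.mem_iUnion.mpr ⟨⟨fun i => (⟨d i, hdD i⟩, ⟨r, hrpos⟩), ?_⟩, ?_⟩
      · intro i j hij
        rw [Set.disjoint_left]
        intro y hyi hyj
        simp only [Metric.mem_ball] at hyi hyj
        have h7 := hsep i j hij
        have : dist (x i) (x j) ≤ dist (x i) (d i) + dist (d i) y + dist y (d j) + dist (d j) (x j) := by
          calc dist (x i) (x j) ≤ dist (x i) y + dist y (x j) := dist_triangle _ _ _
            _ ≤ (dist (x i) (d i) + dist (d i) y) + (dist y (d j) + dist (d j) (x j)) := by
                gcongr <;> [exact dist_triangle _ _ _; exact dist_triangle _ _ _]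
            _ = _ := by ring
        have hdi : dist (d i) y < (r : ℝ) := by rwa [dist_comm]
        have hdjx : dist (d j) (x j) < ε := by rw [dist_comm]; exact hdx j
        have : dist (x i) (x j) < ε + 2*ε + 2*ε + ε := by
          have := hdx i
          have := hdjx
          linarith [hyj, hdi, hr2]
        linarith
      · refine Set.mem_iInter.mpr (fun i => ?_)
        exact ⟨x i, hxq i, by simp only [Metric.mem_ball]; linarith [hdx i, hr1]⟩
    · intro hq
      simp only [Set.mem_iUnion] at hq
      obtain ⟨f, hf⟩ := hq
      have hmem := Set.mem_iInter.mp hf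
      choose p hp1 hp2 using fun i => hmem i
      have hpinj : Function.Injective p := by
        intro i j hij
        by_contra hne
        exact Set.disjoint_left.mp (f.2 i j hne) (hp2 i) (hij ▸ hp2 j)
      have hsub : Set.range p ⊆ q.1 := by rintro _ ⟨i, rfl⟩; exact hp1 i
      have : (Set.range p).ncard ≤ q.1.ncard := Set.ncard_le_ncard hsub q.2
      have hrange : (Set.range p).ncard = n := by
        rw [← Set.image_univ, Set.ncard_image_of_injective _ hpinj, Set.ncard_univ]
        simp
      simpa [Set.mem_setOf_eq, ← hrange]
  rw [key]
  exact MeasurableSet.iUnion (fun f => MeasurableSet.iInter (fun i =>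
    hit_meas _ _ (by exact_mod_cast (f.1 i).2.2)))

/-- For every `n`, the `n`-particle sector `Γₙ(ℝ³) = {q : #q = n}` belongs to the
σ-algebra generated by the sets `∅(B)`, `B` an open ball. -/
theorem stmt9 (n : ℕ) :
    @MeasurableSet Config3 (MeasurableSpace.generateFrom ballEmptySets)
      {q : Config3 | q.1.ncard = n} := by
  have h : {q : Config3 | q.1.ncard = n} =
      {q : Config3 | n ≤ q.1.ncard} \ {q : Config3 | n + 1 ≤ q.1.ncard} := by
    ext q
    simp only [Set.mem_setOf_eq, Set.mem_diff]
    omega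
  rw [h]
  exact (Sge_meas n).diff (Sge_meas (n + 1))
end
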